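/- arXiv:0912.5426 — 10 statements merged into one kernel-verified Lean document; each statement's English description precedes it below -/
import Mathlib

section
/- For a microdata table T with n rows, there exists an l-diverse partition of Fin n if and only if the whole index set Fin n, viewed as a single group, is l-eligible (i.e., for every b : B, l · |{i : sa(i) = b}| ≤ n). -/
open scoped Classical

/-- A partition of the row set `Fin n` into pairwise disjoint nonempty QI-groups
covering all rows. -/
structure MPartition (n : ℕ) where
  groups : Finset (Finset (Fin n))
  nonempty : ∀ G ∈ groups, G.Nonempty
  pairwiseDisjoint : (groups : Set (Finset (Fin n))).PairwiseDisjoint id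
  covers : ∀ i : Fin n, ∃ G ∈ groups, i ∈ G

/-- A group `G` is `l`-eligible if for every sensitive value `b`,
`l` times the number of rows of `G` with sensitive value `b` is at most `|G|`. -/
def Eligible {n d : ℕ} {V B : Type*} (l : ℕ)
    (T : Fin n → (Fin d → V) × B) (G : Finset (Fin n)) : Prop :=
  ∀ b : B, l * (G.filter (fun i => (T i).2 = b)).card ≤ G.card

/-- A partition is `l`-diverse if every one of its QI-groups is `l`-eligible. -/
def Diverse {n d : ℕ} {V B : Type*} (l : ℕ)
    (T : Fin n → (Fin d → V) × B) (P : MPartition n) : Prop :=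
  ∀ G ∈ P.groups, Eligible l T G

open Finset

theorem Eligible.biUnion {n d : ℕ} {V B : Type*} {l : ℕ} {T : Fin n → (Fin d → V) × B}
    {𝒢 : Finset (Finset (Fin n))} (hdisj : (𝒢 : Set (Finset (Fin n))).PairwiseDisjoint id)
    (h𝒢 : ∀ G ∈ 𝒢, Eligible l T G) : Eligible l T (𝒢.biUnion id) := by
  intro b
  have hdisj_filter : (𝒢 : Set (Finset (Fin n))).PairwiseDisjoint
      (fun G => G.filter (fun i => (T i).2 = b)) :=
    fun G hG H hH hne => (hdisj hG hH hne).mono (filter_subset _ _) (filter_subset _ _)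
  calc l * ((𝒢.biUnion id).filter (fun i => (T i).2 = b)).card
      = ∑ G ∈ 𝒢, l * (G.filter (fun i => (T i).2 = b)).card := by
        rw [← mul_sum, ← card_biUnion hdisj_filter, filter_biUnion]; rfl
    _ ≤ ∑ G ∈ 𝒢, G.card := sum_le_sum fun G hG => h𝒢 G hG b
    _ = (𝒢.biUnion id).card := (card_biUnion hdisj).symm

namespace MPartition

theorem biUnion_groups_eq_univ {n : ℕ} (P : MPartition n) : P.groups.biUnion id = univ :=
  eq_univ_of_forall fun i => by simpa only [mem_biUnion, id] using P.covers i

/-- The filter drops the empty group when `n = 0`. -/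
def single (n : ℕ) : MPartition n where
  groups := ({univ} : Finset (Finset (Fin n))).filter Finset.Nonempty
  nonempty _ hG := (mem_filter.mp hG).2
  pairwiseDisjoint G hG H hH hne := by
    simp only [coe_filter, mem_singleton, Set.mem_ofPred_eq] at hG hH
    exact absurd (hG.1.trans hH.1.symm) hne
  covers i := ⟨univ, mem_filter.mpr ⟨mem_singleton_self _, ⟨i, mem_univ i⟩⟩, mem_univ i⟩

theorem eq_univ_of_mem_single_groups {n : ℕ} {G : Finset (Fin n)}
    (hG : G ∈ (single n).groups) : G = univ := by
  simp only [single, mem_filter, mem_singleton] at hG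
  exact hG.1

end MPartition

theorem stmt1_general {n d : ℕ} {V B : Type*} (l : ℕ)
    (T : Fin n → (Fin d → V) × B) :
    (∃ P : MPartition n, Diverse l T P) ↔ Eligible l T Finset.univ := by
  constructor
  · rintro ⟨P, hP⟩
    simpa only [P.biUnion_groups_eq_univ] using Eligible.biUnion P.pairwiseDisjoint hP
  · intro hE
    exact ⟨MPartition.single n, fun G hG => MPartition.eq_univ_of_mem_single_groups hG ▸ hE⟩

theorem stmt1 {n d : ℕ} {V B : Type*} (l : ℕ) (hl : 1 ≤ l)
    (T : Fin n → (Fin d → V) × B) :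
    (∃ P : MPartition n, Diverse l T P) ↔ Eligible l T Finset.univ :=
  stmt1_general l T
end

section
/- Let λ ≥ 1 be a real number and let P₃ be an l-diverse partition that is a λ-approximate solution to tuple minimization, i.e., supp(P₃) ≤ λ · supp(P) for every l-diverse partition P. Then P₃ is a (λ·d)-approximate solution to star minimization: stars(P₃) ≤ λ · d · stars(P) for every l-diverse partition P. -/
open scoped Classical

/-- A group `G` disagrees on attribute `j` if two rows of `G` have different
QI values on attribute `j`. -/
def Disagrees {n d : ℕ} {V B : Type*} (T : Fin n → (Fin d → V) × B)
    (G : Finset (Fin n)) (j : Fin d) : Prop :=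
  ∃ i ∈ G, ∃ i' ∈ G, (T i).1 j ≠ (T i').1 j

/-- Number of stars of a partition. -/
noncomputable def stars {n d : ℕ} {V B : Type*} (T : Fin n → (Fin d → V) × B)
    (P : MPartition n) : ℕ :=
  ∑ G ∈ P.groups, G.card * (Finset.univ.filter (fun j : Fin d => Disagrees T G j)).card

/-- Number of suppressed rows of a partition. -/
noncomputable def supp {n d : ℕ} {V B : Type*} (T : Fin n → (Fin d → V) × B)
    (P : MPartition n) : ℕ :=
  ∑ G ∈ P.groups, if ∃ j : Fin d, Disagrees T G j then G.card else 0

/-! A suppressed row carries between 1 and `d` stars and an unsuppressed one none, so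
`supp ≤ stars ≤ d * supp` for every partition; the approximation bound for `supp` then
transfers to `stars` at the cost of the factor `d`. -/

lemma stars_le_mul_supp {n d : ℕ} {V B : Type*} (T : Fin n → (Fin d → V) × B)
    (P : MPartition n) : stars T P ≤ d * supp T P := by
  rw [stars, supp, Finset.mul_sum]
  refine Finset.sum_le_sum fun G _ => ?_
  split_ifs with h
  · rw [mul_comm d]
    exact Nat.mul_le_mul_left _ ((Finset.card_filter_le _ _).trans_eq (Finset.card_fin d))
  · simp [not_exists.mp h]

lemma supp_le_stars {n d : ℕ} {V B : Type*} (T : Fin n → (Fin d → V) × B)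
    (P : MPartition n) : supp T P ≤ stars T P := by
  refine Finset.sum_le_sum fun G _ => ?_
  split_ifs with h
  · obtain ⟨j, hj⟩ := h
    exact Nat.le_mul_of_pos_right _ (Finset.card_pos.mpr ⟨j, by simp [hj]⟩)
  · exact Nat.zero_le _

theorem stmt3_general {n d : ℕ} {V B : Type*} (l : ℕ)
    (T : Fin n → (Fin d → V) × B) (lam : ℝ) (hlam : 1 ≤ lam)
    (P₃ : MPartition n)
    (happrox : ∀ P : MPartition n, Diverse l T P →
      (supp T P₃ : ℝ) ≤ lam * (supp T P : ℝ)) :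
    ∀ P : MPartition n, Diverse l T P →
      (stars T P₃ : ℝ) ≤ lam * (d : ℝ) * (stars T P : ℝ) := by
  intro P hP
  have hlam₀ : 0 ≤ lam := zero_le_one.trans hlam
  calc (stars T P₃ : ℝ)
      ≤ d * supp T P₃ := mod_cast stars_le_mul_supp T P₃
    _ ≤ d * (lam * supp T P) := by gcongr; exact happrox P hP
    _ ≤ d * (lam * stars T P) := by gcongr; exact_mod_cast supp_le_stars T P
    _ = lam * d * stars T P := by ring

theorem stmt3 {n d : ℕ} {V B : Type*} (l : ℕ) (hl : 1 ≤ l) (hd : 1 ≤ d)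
    (T : Fin n → (Fin d → V) × B) (lam : ℝ) (hlam : 1 ≤ lam)
    (P₃ : MPartition n) (hP₃ : Diverse l T P₃)
    (happrox : ∀ P : MPartition n, Diverse l T P →
      (supp T P₃ : ℝ) ≤ lam * (supp T P : ℝ)) :
    ∀ P : MPartition n, Diverse l T P →
      (stars T P₃ : ℝ) ≤ lam * (d : ℝ) * (stars T P : ℝ) :=
  stmt3_general l T lam hlam P₃ happrox
end

section
/- In the table T constructed from a 3DM instance, for every attribute index i ∈ Fin d there are exactly 3 rows of T whose QI value on attribute A_i is 0, namely the rows (k, a) with a equal to the k-th coordinate of p(i) for k ∈ Fin 3. -/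
/-- The `k`-th coordinate (`k ∈ Fin 3`) of a 3D point. -/
def coord3 {n : ℕ} (k : Fin 3) (q : Fin n × Fin n × Fin n) : Fin n :=
  if k = 0 then q.1 else if k = 1 then q.2.1 else q.2.2

/-- The QI value of row `r = (k, a)` of the constructed table on attribute `A_i`:
it is `0` if the `k`-th coordinate of `p i` equals `a`, and `u r` otherwise. -/
def qiT {n d m : ℕ} (p : Fin d → Fin n × Fin n × Fin n)
    (u : Fin 3 × Fin n → Fin (m + 1)) (r : Fin 3 × Fin n) (i : Fin d) : Fin (m + 1) :=
  if coord3 r.1 (p i) = r.2 then 0 else u r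

namespace Finset

variable {α β : Type*} [Fintype α] [DecidableEq α] [DecidableEq β]

theorem filter_apply_fst_eq_snd [Fintype β] (f : α → β) :
    univ.filter (fun r : α × β => f r.1 = r.2) = univ.image (fun a => (a, f a)) := by
  ext ⟨a, b⟩
  simp [eq_comm]

theorem card_image_graph (f : α → β) :
    (univ.image (fun a => (a, f a))).card = Fintype.card α :=
  card_image_of_injective _ fun _ _ h => congrArg Prod.fst h

end Finset

theorem qiT_eq_zero_iff {n d m : ℕ} {p : Fin d → Fin n × Fin n × Fin n}
    {u : Fin 3 × Fin n → Fin (m + 1)} (hu0 : ∀ r, u r ≠ 0) (r : Fin 3 × Fin n) (i : Fin d) :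
    qiT p u r i = 0 ↔ coord3 r.1 (p i) = r.2 := by
  unfold qiT
  split_ifs with h
  · exact iff_of_true rfl h
  · exact iff_of_false (hu0 r) h

theorem stmt4_general {n d m : ℕ}
    (p : Fin d → Fin n × Fin n × Fin n)
    (u : Fin 3 × Fin n → Fin (m + 1))
    (hu0 : ∀ r, u r ≠ 0)
    (i : Fin d) :
    Finset.univ.filter (fun r : Fin 3 × Fin n => qiT p u r i = 0) =
      Finset.univ.image (fun k : Fin 3 => (k, coord3 k (p i))) ∧
    (Finset.univ.filter (fun r : Fin 3 × Fin n => qiT p u r i = 0)).card = 3 := by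
  have hzero : Finset.univ.filter (fun r : Fin 3 × Fin n => qiT p u r i = 0) =
      Finset.univ.image (fun k : Fin 3 => (k, coord3 k (p i))) := by
    simp only [qiT_eq_zero_iff hu0]
    exact Finset.filter_apply_fst_eq_snd (fun k => coord3 k (p i))
  refine ⟨hzero, ?_⟩
  rw [hzero, Finset.card_image_graph, Fintype.card_fin]

theorem stmt4 {n d m : ℕ} (hn : 1 ≤ n) (hnd : n ≤ d) (hm3 : 3 ≤ m) (hm : m ≤ 3 * n)
    (p : Fin d → Fin n × Fin n × Fin n) (hp : Function.Injective p)
    (u : Fin 3 × Fin n → Fin (m + 1))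
    (hu0 : ∀ r, u r ≠ 0)
    (husurj : ∀ v : Fin (m + 1), v ≠ 0 → ∃ r, u r = v)
    (hudiff : ∀ k k' : Fin 3, ∀ a a' : Fin n, k ≠ k' → u (k, a) ≠ u (k', a'))
    (i : Fin d) :
    Finset.univ.filter (fun r : Fin 3 × Fin n => qiT p u r i = 0) =
      Finset.univ.image (fun k : Fin 3 => (k, coord3 k (p i))) ∧
    (Finset.univ.filter (fun r : Fin 3 × Fin n => qiT p u r i = 0)).card = 3 :=
  stmt4_general p u hu0 i
end

section
/- Let P be a 3-diverse partition of the rows of the constructed table T, and let G be a useful QI-group of P. Then every non-star QI value of G is 0; that is, for every attribute A_i on which all rows of G agree, the common QI value is 0. -/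
open scoped Classical

/-- A partition of the row set `Fin 3 × Fin n` into pairwise disjoint nonempty
QI-groups covering all rows. -/
structure RPartition (n : ℕ) where
  groups : Finset (Finset (Fin 3 × Fin n))
  nonempty : ∀ G ∈ groups, G.Nonempty
  pairwiseDisjoint : (groups : Set (Finset (Fin 3 × Fin n))).PairwiseDisjoint id
  covers : ∀ r : Fin 3 × Fin n, ∃ G ∈ groups, r ∈ G

/-- A group `G` disagrees on attribute `A_i` if two of its rows have different
QI values on `A_i`. -/
def Disagrees3 {n d m : ℕ} (p : Fin d → Fin n × Fin n × Fin n)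
    (u : Fin 3 × Fin n → Fin (m + 1)) (G : Finset (Fin 3 × Fin n)) (i : Fin d) : Prop :=
  ∃ r ∈ G, ∃ r' ∈ G, qiT p u r i ≠ qiT p u r' i

/-- A group is useful if there is at least one attribute on which it does not
disagree (i.e., it is not futile). -/
def Useful3 {n d m : ℕ} (p : Fin d → Fin n × Fin n × Fin n)
    (u : Fin 3 × Fin n → Fin (m + 1)) (G : Finset (Fin 3 × Fin n)) : Prop :=
  ∃ i : Fin d, ¬ Disagrees3 p u G i

/-- A group `G` is 3-eligible if for every sensitive value `v`,
`3` times the number of rows of `G` with sensitive value `v` is at most `|G|`. -/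
def Eligible3 {n m : ℕ} (u : Fin 3 × Fin n → Fin (m + 1))
    (G : Finset (Fin 3 × Fin n)) : Prop :=
  ∀ v : Fin (m + 1), 3 * (G.filter (fun r => u r = v)).card ≤ G.card

/-- A partition is 3-diverse if every one of its QI-groups is 3-eligible. -/
def Diverse3 {n m : ℕ} (u : Fin 3 × Fin n → Fin (m + 1)) (P : RPartition n) : Prop :=
  ∀ G ∈ P.groups, Eligible3 u G

/-- Number of stars of a partition of the constructed table. -/
noncomputable def stars3 {n d m : ℕ} (p : Fin d → Fin n × Fin n × Fin n)
    (u : Fin 3 × Fin n → Fin (m + 1)) (P : RPartition n) : ℕ :=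
  ∑ G ∈ P.groups, G.card * (Finset.univ.filter (fun i : Fin d => Disagrees3 p u G i)).card

theorem qiT_eq_zero_or_eq {n d m : ℕ} (p : Fin d → Fin n × Fin n × Fin n)
    (u : Fin 3 × Fin n → Fin (m + 1)) (r : Fin 3 × Fin n) (i : Fin d) :
    qiT p u r i = 0 ∨ qiT p u r i = u r := by
  unfold qiT
  split_ifs <;> simp

theorem qiT_eq_of_not_disagrees3 {n d m : ℕ} {p : Fin d → Fin n × Fin n × Fin n}
    {u : Fin 3 × Fin n → Fin (m + 1)} {G : Finset (Fin 3 × Fin n)} {i : Fin d}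
    (h : ¬ Disagrees3 p u G i) {r r' : Fin 3 × Fin n} (hr : r ∈ G) (hr' : r' ∈ G) :
    qiT p u r i = qiT p u r' i := by
  by_contra hne
  exact h ⟨r, hr, r', hr', hne⟩

theorem Eligible3.exists_ne {n m : ℕ} {u : Fin 3 × Fin n → Fin (m + 1)}
    {G : Finset (Fin 3 × Fin n)} (hG : Eligible3 u G) (hne : G.Nonempty) (v : Fin (m + 1)) :
    ∃ r ∈ G, u r ≠ v := by
  by_contra! hall
  have hfilter : G.filter (fun r => u r = v) = G := Finset.filter_true_of_mem hall
  have h := hG v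
  rw [hfilter] at h
  have := hne.card_pos
  omega

theorem stmt5_general {n d m : ℕ}
    (p : Fin d → Fin n × Fin n × Fin n)
    (u : Fin 3 × Fin n → Fin (m + 1))
    (P : RPartition n) (hP : Diverse3 u P)
    (G : Finset (Fin 3 × Fin n)) (hG : G ∈ P.groups) :
    ∀ i : Fin d, ¬ Disagrees3 p u G i → ∀ r ∈ G, qiT p u r i = 0 := by
  intro i hagree r hr
  by_contra hne
  -- A nonzero common QI value is the sensitive value of every row of `G`.
  obtain ⟨r', hr', hr'v⟩ := (hP G hG).exists_ne ⟨r, hr⟩ (qiT p u r i)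
  have hsame := qiT_eq_of_not_disagrees3 hagree hr' hr
  rcases qiT_eq_zero_or_eq p u r' i with hzero | hsens
  · exact hne (hsame ▸ hzero)
  · exact hr'v (hsens ▸ hsame)

theorem stmt5 {n d m : ℕ} (hn : 1 ≤ n) (hnd : n ≤ d) (hm3 : 3 ≤ m) (hm : m ≤ 3 * n)
    (p : Fin d → Fin n × Fin n × Fin n) (hp : Function.Injective p)
    (u : Fin 3 × Fin n → Fin (m + 1))
    (hu0 : ∀ r, u r ≠ 0)
    (husurj : ∀ v : Fin (m + 1), v ≠ 0 → ∃ r, u r = v)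
    (hudiff : ∀ k k' : Fin 3, ∀ a a' : Fin n, k ≠ k' → u (k, a) ≠ u (k', a'))
    (P : RPartition n) (hP : Diverse3 u P)
    (G : Finset (Fin 3 × Fin n)) (hG : G ∈ P.groups) (huseful : Useful3 p u G) :
    ∀ i : Fin d, ¬ Disagrees3 p u G i → ∀ r ∈ G, qiT p u r i = 0 :=
  stmt5_general p u P hP G hG
end

section
/- Every 3-diverse partition P of the rows of the constructed table T has at least 3n(d−1) stars: stars(P) ≥ 3n(d−1). -/
open scoped Classical

/-!
Let `G` be a 3-eligible group agreeing on attribute `A_i`. If some row `r` of `G` were not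
zeroed on `A_i`, every row of `G` would carry the value `u r ≠ 0` there, hence have sensitive
value `u r`, against eligibility. So all rows of `G` are zeroed, i.e. `G` lies in the three rows
`(k, coord3 k (p i))`; as eligibility forces `|G| ≥ 3`, `G` is exactly these rows and determines
`p i`. By injectivity of `p`, `G` agrees on at most one attribute, so it contributes at least
`|G| (d - 1)` stars, and the group sizes add up to `3n`.
-/

open Finset

theorem le_card_image_of_forall_mul_card_fiber_le {α β : Type*} [DecidableEq β] {s : Finset α}
    (hs : s.Nonempty) (f : α → β) {k : ℕ} (h : ∀ b, k * #{a ∈ s | f a = b} ≤ #s) :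
    k ≤ #(s.image f) := by
  have hfibers : k * #s ≤ #(s.image f) * #s :=
    calc k * #s = ∑ b ∈ s.image f, k * #{a ∈ s | f a = b} := by
          rw [← mul_sum, ← card_eq_sum_card_image]
      _ ≤ ∑ _b ∈ s.image f, #s := sum_le_sum fun b _ => h b
      _ = #(s.image f) * #s := by rw [sum_const, smul_eq_mul]
  exact Nat.le_of_mul_le_mul_right hfibers hs.card_pos

theorem eq_of_forall_coord3_eq {n : ℕ} {q q' : Fin n × Fin n × Fin n}
    (h : ∀ k, coord3 k q = coord3 k q') : q = q' :=
  Prod.ext (h 0) (Prod.ext (by simpa [coord3] using h 1) (by simpa [coord3] using h 2))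

theorem RPartition.sum_card_groups {n : ℕ} (P : RPartition n) : ∑ G ∈ P.groups, #G = 3 * n := by
  have hcover : P.groups.biUnion id = univ :=
    eq_univ_of_forall fun r => mem_biUnion.mpr (P.covers r)
  calc ∑ G ∈ P.groups, #G = #(P.groups.biUnion id) := (card_biUnion P.pairwiseDisjoint).symm
    _ = 3 * n := by rw [hcover, card_univ, Fintype.card_prod, Fintype.card_fin, Fintype.card_fin]

section
variable {n d m : ℕ} {p : Fin d → Fin n × Fin n × Fin n} {u : Fin 3 × Fin n → Fin (m + 1)}
  {G : Finset (Fin 3 × Fin n)}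

theorem Eligible3.three_le_card_image (hG : Eligible3 u G) (hne : G.Nonempty) :
    3 ≤ #(G.image u) :=
  le_card_image_of_forall_mul_card_fiber_le hne u hG

theorem Eligible3.coord3_eq_of_not_disagrees (hG : Eligible3 u G) (hne : G.Nonempty)
    (hu0 : ∀ r, u r ≠ 0) {i : Fin d} (hi : ¬ Disagrees3 p u G i) {r : Fin 3 × Fin n}
    (hr : r ∈ G) : coord3 r.1 (p i) = r.2 := by
  by_contra hunmatched
  have hconst : G.image u ⊆ {u r} := by
    intro v hv
    obtain ⟨r', hr', rfl⟩ := mem_image.mp hv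
    have hqi : qiT p u r' i = qiT p u r i := by
      by_contra h
      exact hi ⟨r', hr', r, hr, h⟩
    unfold qiT at hqi
    rw [if_neg hunmatched] at hqi
    split_ifs at hqi
    · exact absurd hqi.symm (hu0 r)
    · exact mem_singleton.mpr hqi
  have := (hG.three_le_card_image hne).trans (card_le_card hconst)
  simp at this

/-- The rows that carry `0` on an attribute whose point is `q`. -/
def matchingRows {n : ℕ} (q : Fin n × Fin n × Fin n) : Finset (Fin 3 × Fin n) :=
  univ.image fun k => (k, coord3 k q)

theorem Eligible3.eq_matchingRows_of_not_disagrees (hG : Eligible3 u G) (hne : G.Nonempty)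
    (hu0 : ∀ r, u r ≠ 0) {i : Fin d} (hi : ¬ Disagrees3 p u G i) : G = matchingRows (p i) := by
  refine eq_of_subset_of_card_le (fun r hr => ?_) ?_
  · refine mem_image.mpr ⟨r.1, mem_univ _, ?_⟩
    rw [hG.coord3_eq_of_not_disagrees hne hu0 hi hr]
  · calc #(matchingRows (p i)) ≤ #(univ : Finset (Fin 3)) := card_image_le
      _ = 3 := by simp
      _ ≤ #(G.image u) := hG.three_le_card_image hne
      _ ≤ #G := card_image_le

theorem Eligible3.eq_of_not_disagrees (hG : Eligible3 u G) (hne : G.Nonempty)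
    (hu0 : ∀ r, u r ≠ 0) (hp : Function.Injective p) {i j : Fin d}
    (hi : ¬ Disagrees3 p u G i) (hj : ¬ Disagrees3 p u G j) : i = j := by
  refine hp (eq_of_forall_coord3_eq fun k => ?_)
  have hmem : (k, coord3 k (p i)) ∈ G := by
    rw [hG.eq_matchingRows_of_not_disagrees hne hu0 hi]
    exact mem_image_of_mem _ (mem_univ k)
  exact (hG.coord3_eq_of_not_disagrees hne hu0 hj hmem).symm

theorem Eligible3.sub_one_le_card_disagrees (hG : Eligible3 u G) (hne : G.Nonempty)
    (hu0 : ∀ r, u r ≠ 0) (hp : Function.Injective p) :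
    d - 1 ≤ #{i | Disagrees3 p u G i} := by
  have hagree : #{i | ¬ Disagrees3 p u G i} ≤ 1 :=
    card_le_one.mpr fun i hi j hj =>
      hG.eq_of_not_disagrees hne hu0 hp (mem_filter.mp hi).2 (mem_filter.mp hj).2
  have hsplit := card_filter_add_card_filter_not (s := (univ : Finset (Fin d)))
    (fun i => Disagrees3 p u G i)
  rw [card_univ, Fintype.card_fin] at hsplit
  omega

end

theorem stmt7_general {n d m : ℕ}
    (p : Fin d → Fin n × Fin n × Fin n) (hp : Function.Injective p)
    (u : Fin 3 × Fin n → Fin (m + 1))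
    (hu0 : ∀ r, u r ≠ 0)
    (P : RPartition n) (hP : Diverse3 u P) :
    3 * n * (d - 1) ≤ stars3 p u P :=
  calc 3 * n * (d - 1) = ∑ G ∈ P.groups, #G * (d - 1) := by rw [← P.sum_card_groups, sum_mul]
    _ ≤ stars3 p u P := sum_le_sum fun G hG => Nat.mul_le_mul_left _
        ((hP G hG).sub_one_le_card_disagrees (P.nonempty G hG) hu0 hp)

theorem stmt7 {n d m : ℕ} (hn : 1 ≤ n) (hnd : n ≤ d) (hm3 : 3 ≤ m) (hm : m ≤ 3 * n)
    (p : Fin d → Fin n × Fin n × Fin n) (hp : Function.Injective p)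
    (u : Fin 3 × Fin n → Fin (m + 1))
    (hu0 : ∀ r, u r ≠ 0)
    (husurj : ∀ v : Fin (m + 1), v ≠ 0 → ∃ r, u r = v)
    (hudiff : ∀ k k' : Fin 3, ∀ a a' : Fin n, k ≠ k' → u (k, a) ≠ u (k', a'))
    (P : RPartition n) (hP : Diverse3 u P) :
    3 * n * (d - 1) ≤ stars3 p u P :=
  stmt7_general p hp u hu0 P hP
end

section
/- For every finite multiset Q over B there exists an l-eligible sub-multiset Q̇ ≤ Q that pointwise dominates every l-eligible sub-multiset of Q: for every l-eligible multiset Q' ≤ Q and every b : B, the multiplicity of b in Q' is at most the multiplicity of b in Q̇. (Q̇ is the output of phase one of the algorithm applied to QI-group Q.) -/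
/-- A finite multiset `S` over `B` is `l`-eligible if for every `b : B`,
`l` times the multiplicity of `b` in `S` is at most the cardinality of `S`. -/
def MEligible {B : Type*} [DecidableEq B] (l : ℕ) (S : Multiset B) : Prop :=
  ∀ b : B, l * S.count b ≤ Multiset.card S

/-- The pillar height of `S`: the maximum multiplicity of any element of `S`
(`0` for the empty multiset). -/
def pillarHeight {B : Type*} [DecidableEq B] (S : Multiset B) : ℕ :=
  S.toFinset.sup S.count

/-- A pillar of `S` is a value whose multiplicity in `S` equals the (positive)
pillar height of `S`. -/
def IsPillar {B : Type*} [DecidableEq B] (S : Multiset B) (b : B) : Prop :=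
  0 < pillarHeight S ∧ S.count b = pillarHeight S

/-! Each multiplicity in `S ⊔ T` is a multiplicity in `S` or in `T`, while `card (S ⊔ T)` bounds
both cardinalities; so `l`-eligibility is closed under `⊔`, and the join of all `l`-eligible
sub-multisets of `Q` is the greatest one. -/

namespace MEligible

variable {B : Type*} [DecidableEq B] {l : ℕ}

theorem zero : MEligible l (0 : Multiset B) := fun _ => by simp

theorem sup {S T : Multiset B} (hS : MEligible l S) (hT : MEligible l T) :
    MEligible l (S ⊔ T) := fun b => by
  rw [Multiset.sup_eq_union, Multiset.count_union, ← Nat.mul_max_mul_left]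
  exact max_le ((hS b).trans (Multiset.card_le_card Multiset.le_union_left))
    ((hT b).trans (Multiset.card_le_card Multiset.le_union_right))

theorem finset_sup {ι : Type*} {s : Finset ι} {f : ι → Multiset B}
    (h : ∀ i ∈ s, MEligible l (f i)) : MEligible l (s.sup f) :=
  Finset.sup_induction zero (fun _ hS _ hT => hS.sup hT) h

end MEligible

theorem stmt9_general {B : Type*} [DecidableEq B] (l : ℕ) (Q : Multiset B) :
    ∃ Qdot : Multiset B, Qdot ≤ Q ∧ MEligible l Qdot ∧
      ∀ Q' : Multiset B, Q' ≤ Q → MEligible l Q' →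
        ∀ b : B, Q'.count b ≤ Qdot.count b := by
  classical
  let eligibleSubs := Q.powerset.toFinset.filter (MEligible l)
  have mem_eligibleSubs {S : Multiset B} : S ∈ eligibleSubs ↔ S ≤ Q ∧ MEligible l S := by
    simp [eligibleSubs]
  refine ⟨eligibleSubs.sup id, ?_, ?_, ?_⟩
  · exact Finset.sup_le fun S hS => (mem_eligibleSubs.mp hS).1
  · exact MEligible.finset_sup fun S hS => (mem_eligibleSubs.mp hS).2
  · intro Q' hQ' hQ'_elig b
    exact Multiset.count_le_of_le b
      (Finset.le_sup (f := id) (mem_eligibleSubs.mpr ⟨hQ', hQ'_elig⟩))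

theorem stmt9 {B : Type*} [DecidableEq B] (l : ℕ) (hl : 1 ≤ l) (Q : Multiset B) :
    ∃ Qdot : Multiset B, Qdot ≤ Q ∧ MEligible l Qdot ∧
      ∀ Q' : Multiset B, Q' ≤ Q → MEligible l Q' →
        ∀ b : B, Q'.count b ≤ Qdot.count b :=
  stmt9_general l Q
end

section
/- For every valid solution (Q'_1,...,Q'_s, R') one has card R' ≥ l · h(Ṙ), where h(Ṙ) is the pillar height of Ṙ. In particular the optimal number of removed tuples OPT satisfies OPT ≥ l · h(Ṙ). -/
/-! Maximality of `Q̇ᵢ` forces `Q'ᵢ ≤ Q̇ᵢ` for every valid solution, so `Ṙ ≤ R'` and hence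
`h(Ṙ) ≤ h(R')`; and `l`-eligibility of `R'` gives `l · h(R') ≤ card R'`. -/

section

open Multiset

variable {B : Type*} [DecidableEq B]

theorem pillarHeight_le_iff {S : Multiset B} {n : ℕ} :
    pillarHeight S ≤ n ↔ ∀ b, S.count b ≤ n := by
  refine Finset.sup_le_iff.trans ⟨fun h b => ?_, fun h b _ => h b⟩
  by_cases hb : b ∈ S
  · exact h b (mem_toFinset.2 hb)
  · simp [count_eq_zero_of_notMem hb]

theorem count_le_pillarHeight (S : Multiset B) (b : B) : S.count b ≤ pillarHeight S :=
  pillarHeight_le_iff.1 le_rfl b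

theorem pillarHeight_mono {S T : Multiset B} (h : S ≤ T) : pillarHeight S ≤ pillarHeight T :=
  pillarHeight_le_iff.2 fun b => (count_le_of_le b h).trans (count_le_pillarHeight T b)

theorem MEligible.mul_pillarHeight_le {l : ℕ} {S : Multiset B} (h : MEligible l S) :
    l * pillarHeight S ≤ card S := by
  rcases S.toFinset.eq_empty_or_nonempty with hS | hS
  · simp [pillarHeight, hS]
  · obtain ⟨b, -, hb⟩ := Finset.exists_mem_eq_sup _ hS S.count
    rw [pillarHeight, hb]
    exact h b

end

theorem stmt11_general {B : Type*} [DecidableEq B] (l : ℕ) {s : ℕ}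
    (Q Qdot : Fin s → Multiset B)
    (hdom : ∀ i, ∀ Q' : Multiset B, Q' ≤ Q i → MEligible l Q' →
      ∀ b : B, Q'.count b ≤ (Qdot i).count b) :
    ∀ Q' : Fin s → Multiset B, (∀ i, Q' i ≤ Q i) → (∀ i, MEligible l (Q' i)) →
      MEligible l (∑ i, (Q i - Q' i)) →
      l * pillarHeight (∑ i, (Q i - Qdot i)) ≤ Multiset.card (∑ i, (Q i - Q' i)) := by
  intro Q' hle' helig' heligR
  have hQ'_le_Qdot : ∀ i, Q' i ≤ Qdot i := fun i =>
    Multiset.le_iff_count.2 (hdom i (Q' i) (hle' i) (helig' i))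
  have hresidue : ∑ i, (Q i - Qdot i) ≤ ∑ i, (Q i - Q' i) :=
    Finset.sum_le_sum fun i _ => tsub_le_tsub_left (hQ'_le_Qdot i) (Q i)
  calc l * pillarHeight (∑ i, (Q i - Qdot i))
      ≤ l * pillarHeight (∑ i, (Q i - Q' i)) := Nat.mul_le_mul_left l (pillarHeight_mono hresidue)
    _ ≤ Multiset.card (∑ i, (Q i - Q' i)) := heligR.mul_pillarHeight_le

theorem stmt11 {B : Type*} [DecidableEq B] (l : ℕ) (hl : 1 ≤ l) {s : ℕ}
    (Q Qdot : Fin s → Multiset B)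
    (hle : ∀ i, Qdot i ≤ Q i)
    (helig : ∀ i, MEligible l (Qdot i))
    (hdom : ∀ i, ∀ Q' : Multiset B, Q' ≤ Q i → MEligible l Q' →
      ∀ b : B, Q'.count b ≤ (Qdot i).count b) :
    ∀ Q' : Fin s → Multiset B, (∀ i, Q' i ≤ Q i) → (∀ i, MEligible l (Q' i)) →
      MEligible l (∑ i, (Q i - Q' i)) →
      l * pillarHeight (∑ i, (Q i - Qdot i)) ≤ Multiset.card (∑ i, (Q i - Q' i)) :=
  stmt11_general l Q Qdot hdom
end

section
/- Let Q_1,...,Q_s and R be finite multisets over B such that the total multiset T = R + Σ_{i=1}^s Q_i is l-eligible, each Q_i is thin (card Q_i = l · h(Q_i)), and R is not l-eligible (card R < l · h(R)). Then for every pillar p of R there exists some i such that p is not a pillar of Q_i (i.e., it is not the case that Q_i is nonempty and the multiplicity of p in Q_i equals h(Q_i)). -/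
/-! If `p` were a pillar of every `Qᵢ`, thinness would make each `Qᵢ` contribute exactly
`card Qᵢ` to both sides of the eligibility inequality `l · count p T ≤ card T` at `p`.
Cancelling these contributions leaves `l · h(R) ≤ card R`, contradicting that `R` is not
eligible. -/

section

variable {ι B : Type*} [DecidableEq B]

theorem mul_count_add_sum_le_card_iff (l : ℕ) (p : B) (R : Multiset B) (t : Finset ι)
    (Q : ι → Multiset B) (hQ : ∀ i ∈ t, l * (Q i).count p = Multiset.card (Q i)) :
    l * (R + ∑ i ∈ t, Q i).count p ≤ Multiset.card (R + ∑ i ∈ t, Q i) ↔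
      l * R.count p ≤ Multiset.card R := by
  rw [Multiset.count_add, Multiset.card_add, Multiset.count_sum', Multiset.card_sum, mul_add,
    Finset.mul_sum, Finset.sum_congr rfl hQ, add_le_add_iff_right]

theorem mul_count_eq_card_of_thin {l : ℕ} {Q : Multiset B} {p : B}
    (hthin : Multiset.card Q = l * pillarHeight Q) (hp : Q.count p = pillarHeight Q) :
    l * Q.count p = Multiset.card Q := by
  rw [hp, hthin]

end

theorem stmt14_general {B : Type*} [DecidableEq B] (l : ℕ) {s : ℕ}
    (Q : Fin s → Multiset B) (R : Multiset B)
    (htotal : MEligible l (R + ∑ i, Q i))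
    (hthin : ∀ i, Multiset.card (Q i) = l * pillarHeight (Q i))
    (hR : Multiset.card R < l * pillarHeight R) :
    ∀ p : B, IsPillar R p →
      ∃ i, ¬ (Q i ≠ 0 ∧ (Q i).count p = pillarHeight (Q i)) := by
  intro p hp
  by_contra! hpillar
  have hR_le : l * R.count p ≤ Multiset.card R :=
    (mul_count_add_sum_le_card_iff l p R _ Q fun i _ =>
      mul_count_eq_card_of_thin (hthin i) (hpillar i).2).1 (htotal p)
  rw [hp.2] at hR_le
  omega

theorem stmt14 {B : Type*} [DecidableEq B] (l : ℕ) (hl : 1 ≤ l) {s : ℕ}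
    (Q : Fin s → Multiset B) (R : Multiset B)
    (htotal : MEligible l (R + ∑ i, Q i))
    (hthin : ∀ i, Multiset.card (Q i) = l * pillarHeight (Q i))
    (hR : Multiset.card R < l * pillarHeight R) :
    ∀ p : B, IsPillar R p →
      ∃ i, ¬ (Q i ≠ 0 ∧ (Q i).count p = pillarHeight (Q i)) :=
  stmt14_general l Q R htotal hthin hR
end

section
/- Let Q_1,...,Q_s and R be finite multisets over B such that the total multiset T = R + Σ_{i=1}^s Q_i is l-eligible, each Q_i is thin (card Q_i = l · h(Q_i)) and conflicting (some pillar of Q_i is also a pillar of R), and R is not l-eligible (card R < l · h(R)). Then R has at least two pillars: there exist distinct values b₁ ≠ b₂ whose multiplicities in R both equal h(R). -/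
/- If `R` had a single pillar `b`, every conflicting `Qᵢ` would have `b` as a pillar, and
thinness says exactly that `b` saturates `Qᵢ`: `l · count b Qᵢ = card Qᵢ`. Removing saturated
parts preserves the eligibility inequality at `b`, so `l · h(R) = l · count b R ≤ card R`,
contradicting that `R` is not eligible. -/

section Pillars

variable {B : Type*} [DecidableEq B]

theorem exists_count_eq_pillarHeight {S : Multiset B} (h : 0 < pillarHeight S) :
    ∃ b, S.count b = pillarHeight S := by
  have hne : S.toFinset.Nonempty := by
    rw [Finset.nonempty_iff_ne_empty]
    rintro hempty
    simp [pillarHeight, hempty] at h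
  obtain ⟨b, -, hb⟩ := Finset.exists_mem_eq_sup _ hne S.count
  exact ⟨b, hb.symm⟩

theorem mul_count_sum_eq_card_sum {ι : Type*} {l : ℕ} {b : B} {s : Finset ι}
    {Q : ι → Multiset B} (h : ∀ i ∈ s, l * (Q i).count b = Multiset.card (Q i)) :
    l * (∑ i ∈ s, Q i).count b = Multiset.card (∑ i ∈ s, Q i) := by
  rw [Multiset.count_sum', Multiset.card_sum, Finset.mul_sum]
  exact Finset.sum_congr rfl h

theorem MEligible.mul_count_le_card_of_add {l : ℕ} {R S : Multiset B} (h : MEligible l (R + S))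
    {b : B} (hS : l * S.count b = Multiset.card S) : l * R.count b ≤ Multiset.card R := by
  have hb := h b
  rw [Multiset.count_add, Multiset.card_add, mul_add, hS] at hb
  omega

end Pillars

theorem stmt15_general {B : Type*} [DecidableEq B] (l : ℕ) {s : ℕ}
    (Q : Fin s → Multiset B) (R : Multiset B)
    (htotal : MEligible l (R + ∑ i, Q i))
    (hthin : ∀ i, Multiset.card (Q i) = l * pillarHeight (Q i))
    (hconf : ∀ i, ∃ p : B, IsPillar (Q i) p ∧ IsPillar R p)
    (hR : Multiset.card R < l * pillarHeight R) :
    ∃ b₁ b₂ : B, b₁ ≠ b₂ ∧ R.count b₁ = pillarHeight R ∧ R.count b₂ = pillarHeight R := by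
  by_contra! hunique
  obtain ⟨b, hb⟩ := exists_count_eq_pillarHeight (Nat.pos_of_mul_pos_left (Nat.zero_lt_of_lt hR))
  have hsaturated : ∀ i ∈ Finset.univ, l * (Q i).count b = Multiset.card (Q i) := by
    intro i _
    obtain ⟨p, hpQ, hpR⟩ := hconf i
    obtain rfl : p = b := by_contra fun hpb => hunique p b hpb hpR.2 hb
    rw [hpQ.2, hthin]
  have hRb := htotal.mul_count_le_card_of_add (mul_count_sum_eq_card_sum hsaturated)
  rw [hb] at hRb
  omega

theorem stmt15 {B : Type*} [DecidableEq B] (l : ℕ) (hl : 1 ≤ l) {s : ℕ}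
    (Q : Fin s → Multiset B) (R : Multiset B)
    (htotal : MEligible l (R + ∑ i, Q i))
    (hthin : ∀ i, Multiset.card (Q i) = l * pillarHeight (Q i))
    (hconf : ∀ i, ∃ p : B, IsPillar (Q i) p ∧ IsPillar R p)
    (hR : Multiset.card R < l * pillarHeight R) :
    ∃ b₁ b₂ : B, b₁ ≠ b₂ ∧ R.count b₁ = pillarHeight R ∧ R.count b₂ = pillarHeight R :=
  stmt15_general l Q R htotal hthin hconf hR
end

section
/- Let T be a microdata table with n rows (n even, n ≥ 2) whose sensitive values lie in a two-element type, with exactly n/2 rows carrying each of the two sensitive values. Then there exists a 2-diverse partition P* of Fin n in which every QI-group consists of exactly 2 rows with different sensitive values, and which is optimal for star minimization: stars(P*) ≤ stars(P) for every 2-diverse partition P of Fin n. -/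
open scoped Classical

/-!
With two sensitive values, a 2-eligible group holds equally many rows of each value, so it
splits into pairs of rows with different values. Refining a partition can only shrink the set
of attributes on which the group of a given row disagrees, and the star count is the sum of
these numbers over the rows; hence every 2-diverse partition is refined by a partition into
such mixed pairs with no more stars. Mixed pairs are 2-eligible, and the single-group partition
is 2-diverse by balance, so a mixed-pair partition with the fewest stars is optimal.
-/

open Finset

namespace Finpartition

variable {α : Type*} [DecidableEq α]

theorem sum_card_mul_eq_sum_part {s : Finset α} (P : Finpartition s) (f : Finset α → ℕ) :
    ∑ t ∈ P.parts, #t * f t = ∑ a ∈ s, f (P.part a) :=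
  calc ∑ t ∈ P.parts, #t * f t = ∑ t ∈ P.parts, ∑ a ∈ t, f (P.part a) := by
        refine sum_congr rfl fun t ht => ?_
        rw [sum_congr rfl fun a ha => congrArg f (P.part_eq_of_mem ht ha), sum_const,
          smul_eq_mul]
    _ = ∑ a ∈ P.parts.biUnion id, f (P.part a) := (sum_biUnion P.disjoint).symm
    _ = ∑ a ∈ s, f (P.part a) := by rw [P.biUnion_parts]

theorem part_subset_part_of_le {s : Finset α} {P Q : Finpartition s} (h : P ≤ Q) {a : α}
    (ha : a ∈ s) : P.part a ⊆ Q.part a := by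
  obtain ⟨t, ht, hle⟩ := h (P.part_mem.2 ha)
  rwa [Q.part_eq_of_mem ht (hle (P.mem_part_self.2 ha))]

theorem sum_card_mul_le_of_le {s : Finset α} {P Q : Finpartition s} (h : P ≤ Q)
    {f : Finset α → ℕ} (hf : Monotone f) :
    ∑ t ∈ P.parts, #t * f t ≤ ∑ t ∈ Q.parts, #t * f t := by
  rw [sum_card_mul_eq_sum_part, sum_card_mul_eq_sum_part]
  exact sum_le_sum fun a ha => hf (part_subset_part_of_le h ha)

theorem exists_pairs_of_card_eq (p : α → Prop) {A C : Finset α}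
    (hA : ∀ a ∈ A, p a) (hC : ∀ c ∈ C, ¬p c) (hAC : #A = #C) :
    ∃ P : Finpartition (A ∪ C), ∀ t ∈ P.parts, #t = 2 ∧ ∃ a ∈ t, ∃ c ∈ t, p a ∧ ¬p c := by
  induction A using Finset.induction_on generalizing C with
  | empty =>
    obtain rfl : C = ∅ := card_eq_zero.1 (by simpa using hAC.symm)
    exact ⟨(Finpartition.empty _).copy (by simp), by simp⟩
  | insert a A ha ih =>
    have hpa := hA a (mem_insert_self a A)
    obtain ⟨c, hc⟩ : C.Nonempty := card_pos.1 (by rw [← hAC, card_insert_of_notMem ha]; omega)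
    have hpc := hC c hc
    obtain ⟨P, hP⟩ := ih (fun x hx => hA x (mem_insert_of_mem hx))
      (fun x hx => hC x (mem_of_mem_erase hx))
      (by rw [card_erase_of_mem hc, ← hAC, card_insert_of_notMem ha, Nat.add_sub_cancel])
    have hac : a ≠ c := fun h => hpc (h ▸ hpa)
    have haAC : a ∉ A ∪ C.erase c := by
      simp only [mem_union, not_or]
      exact ⟨ha, fun h => hC a (mem_of_mem_erase h) hpa⟩
    have hcAC : c ∉ A ∪ C.erase c := by
      simp only [mem_union, not_or]
      exact ⟨fun h => hpc (hA c (mem_insert_of_mem h)), notMem_erase c C⟩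
    have hdisj : Disjoint (A ∪ C.erase c) {a, c} :=
      disjoint_insert_right.2 ⟨haAC, disjoint_singleton_right.2 hcAC⟩
    have hunion : (A ∪ C.erase c) ⊔ {a, c} = insert a A ∪ C := by
      ext x
      grind
    refine ⟨P.extend (b := {a, c}) (insert_ne_empty _ _) hdisj hunion, fun t ht => ?_⟩
    rcases mem_insert.1 ht with rfl | ht
    · exact ⟨card_pair hac, a, mem_insert_self _ _, c, by simp, hpa, hpc⟩
    · exact hP t ht

theorem exists_pairs_of_card_filter_eq (p : α → Prop) [DecidablePred p] {s : Finset α}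
    (h : #(s.filter p) = #(s.filter fun a => ¬p a)) :
    ∃ P : Finpartition s, ∀ t ∈ P.parts, #t = 2 ∧ ∃ a ∈ t, ∃ c ∈ t, p a ∧ ¬p c := by
  obtain ⟨P, hP⟩ := exists_pairs_of_card_eq p (fun a ha => (mem_filter.1 ha).2)
    (fun c hc => (mem_filter.1 hc).2) h
  exact ⟨P.copy (filter_union_filter_not_eq p s), hP⟩

end Finpartition

section Microdata

variable {n d : ℕ} {V B : Type*}

def IsMixedPair (T : Fin n → (Fin d → V) × B) (G : Finset (Fin n)) : Prop :=
  #G = 2 ∧ ∃ i ∈ G, ∃ i' ∈ G, (T i).2 ≠ (T i').2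

theorem IsMixedPair.eligible {T : Fin n → (Fin d → V) × B} {G : Finset (Fin n)}
    (h : IsMixedPair T G) : Eligible 2 T G := by
  obtain ⟨hcard, i, hi, i', hi', hne⟩ := h
  intro b
  have hlt : #(G.filter fun x => (T x).2 = b) < #G := by
    refine card_lt_card (filter_ssubset.2 ?_)
    by_cases hib : (T i).2 = b
    · exact ⟨i', hi', fun h => hne (hib.trans h.symm)⟩
    · exact ⟨i, hi, hib⟩
  omega

theorem Eligible.card_filter_eq_card_filter_not [Fintype B] (hB : Fintype.card B = 2)
    {T : Fin n → (Fin d → V) × B} {G : Finset (Fin n)} (hG : Eligible 2 T G) (b : B) :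
    #(G.filter fun i => (T i).2 = b) = #(G.filter fun i => ¬(T i).2 = b) := by
  obtain ⟨b', hb'⟩ := card_eq_one.1
    (show #(univ.erase b) = 1 by rw [card_erase_of_mem (mem_univ b), card_univ, hB])
  have hnot : (G.filter fun i => ¬(T i).2 = b) = G.filter fun i => (T i).2 = b' :=
    filter_congr fun i _ => by simpa using Finset.ext_iff.1 hb' (T i).2
  have hsplit := card_filter_add_card_filter_not (s := G) fun i => (T i).2 = b
  rw [hnot] at hsplit ⊢
  have := hG b
  have := hG b'
  omega

theorem Disagrees.mono {T : Fin n → (Fin d → V) × B} {G G' : Finset (Fin n)} {j : Fin d}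
    (h : Disagrees T G j) (hGG' : G ⊆ G') : Disagrees T G' j :=
  let ⟨i, hi, i', hi', hne⟩ := h
  ⟨i, hGG' hi, i', hGG' hi', hne⟩

namespace MPartition

def toFinpartition (P : MPartition n) : Finpartition (univ : Finset (Fin n)) where
  parts := P.groups
  supIndep := supIndep_iff_pairwiseDisjoint.2 P.pairwiseDisjoint
  sup_parts := eq_univ_of_forall fun i =>
    let ⟨G, hG, hi⟩ := P.covers i
    mem_sup.2 ⟨G, hG, hi⟩
  bot_notMem h := (P.nonempty ⊥ h).ne_empty rfl

def ofFinpartition (P : Finpartition (univ : Finset (Fin n))) : MPartition n where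
  groups := P.parts
  nonempty _ := P.nonempty_of_mem_parts
  pairwiseDisjoint := P.disjoint
  covers i := P.exists_mem (mem_univ i)

end MPartition

theorem stars_le_stars_of_le (T : Fin n → (Fin d → V) × B) {P Q : MPartition n}
    (h : P.toFinpartition ≤ Q.toFinpartition) : stars T P ≤ stars T Q :=
  Finpartition.sum_card_mul_le_of_le h fun _ _ hGG' =>
    card_le_card (monotone_filter_right _ fun _ _ hj => hj.mono hGG')

theorem Diverse.exists_mixedPair_refinement [Fintype B] (hB : Fintype.card B = 2)
    {T : Fin n → (Fin d → V) × B} {P : MPartition n} (hP : Diverse 2 T P) :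
    ∃ Q : MPartition n, (∀ G ∈ Q.groups, IsMixedPair T G) ∧
      Q.toFinpartition ≤ P.toFinpartition := by
  obtain ⟨b⟩ : Nonempty B := Fintype.card_pos_iff.1 (by omega)
  have hpairs : ∀ G ∈ P.toFinpartition.parts,
      ∃ F : Finpartition G, ∀ g ∈ F.parts, IsMixedPair T g := fun G hG => by
    obtain ⟨F, hF⟩ := Finpartition.exists_pairs_of_card_filter_eq (fun i => (T i).2 = b)
      ((hP G hG).card_filter_eq_card_filter_not hB b)
    refine ⟨F, fun g hg => ?_⟩
    obtain ⟨hcard, i, hi, i', hi', hib, hi'b⟩ := hF g hg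
    exact ⟨hcard, i, hi, i', hi', fun h => hi'b (h ▸ hib)⟩
  choose F hF using hpairs
  refine ⟨MPartition.ofFinpartition (P.toFinpartition.bind F), fun g hg => ?_, fun g hg => ?_⟩
  · obtain ⟨G, hG, hg⟩ := Finpartition.mem_bind.1 hg
    exact hF G hG g hg
  · obtain ⟨G, hG, hg⟩ := Finpartition.mem_bind.1 hg
    exact ⟨G, hG, (F G hG).le hg⟩

end Microdata

theorem stmt19_general {n d : ℕ} {V B : Type*} [Fintype B]
    (hB : Fintype.card B = 2)
    (T : Fin n → (Fin d → V) × B)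
    (hbalanced : ∀ b : B,
      (Finset.univ.filter (fun i : Fin n => (T i).2 = b)).card = n / 2) :
    ∃ Pstar : MPartition n,
      (∀ G ∈ Pstar.groups, G.card = 2 ∧
        ∃ i ∈ G, ∃ i' ∈ G, (T i).2 ≠ (T i').2) ∧
      Diverse 2 T Pstar ∧
      ∀ P : MPartition n, Diverse 2 T P → stars T Pstar ≤ stars T P := by
  have htop : Diverse 2 T (MPartition.ofFinpartition ⊤) := fun G hG b => by
    rw [mem_singleton.1 (Finpartition.parts_top_subset _ hG), hbalanced b, card_univ,
      Fintype.card_fin]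
    exact Nat.mul_div_le n 2
  obtain ⟨P₀, hP₀, -⟩ := htop.exists_mixedPair_refinement hB
  obtain ⟨Pstar, hPstar, hmin⟩ :=
    (measure (stars T)).wf.has_min {P | ∀ G ∈ P.groups, IsMixedPair T G} ⟨P₀, hP₀⟩
  refine ⟨Pstar, hPstar, fun G hG => (hPstar G hG).eligible, fun P hP => ?_⟩
  obtain ⟨Q, hQ, hQP⟩ := hP.exists_mixedPair_refinement hB
  exact (not_lt.1 (hmin Q hQ)).trans (stars_le_stars_of_le T hQP)

theorem stmt19 {n d : ℕ} {V B : Type*} [Fintype B]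
    (hB : Fintype.card B = 2)
    (hn2 : 2 ≤ n) (hneven : Even n)
    (T : Fin n → (Fin d → V) × B)
    (hbalanced : ∀ b : B,
      (Finset.univ.filter (fun i : Fin n => (T i).2 = b)).card = n / 2) :
    ∃ Pstar : MPartition n,
      (∀ G ∈ Pstar.groups, G.card = 2 ∧
        ∃ i ∈ G, ∃ i' ∈ G, (T i).2 ≠ (T i').2) ∧
      Diverse 2 T Pstar ∧
      ∀ P : MPartition n, Diverse 2 T P → stars T Pstar ≤ stars T P :=
  stmt19_general hB T hbalanced
end
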